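/- Let M ≥ 1 and let w_1, …, w_M ∈ [0,1) be real numbers with ∑_{m=1}^M w_m = 1, define HHI = ∑_{m=1}^M w_m², and suppose w_m ≤ w̄ for all m where w̄ ∈ [0,1). Then (1 + HHI)/M ≤ (1/M) · ∑_{m=1}^M w_m/(1 − w_m) ≤ (1 + HHI/(1 − w̄))/M. -/
import Mathlib


/-- Two-sided HHI bound on the expected relative slippage increase: if every share is
at most w̄ < 1, then (1 + HHI)/M ≤ (1/M)·∑ w_m/(1 − w_m) ≤ (1 + HHI/(1 − w̄))/M. -/
theorem expected_withdrawal_impact_two_sided_bound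
    (M : ℕ) (hM : 1 ≤ M)
    (w : Fin M → ℝ) (hw0 : ∀ m, 0 ≤ w m) (hw1 : ∀ m, w m < 1)
    (hsum : ∑ m, w m = 1)
    (HHI : ℝ) (hHHI : HHI = ∑ m, (w m) ^ 2)
    (wbar : ℝ) (hwbar0 : 0 ≤ wbar) (hwbar1 : wbar < 1)
    (hle : ∀ m, w m ≤ wbar) :
    (1 + HHI) / M ≤ (1 / (M : ℝ)) * ∑ m, w m / (1 - w m) ∧
    (1 / (M : ℝ)) * ∑ m, w m / (1 - w m) ≤ (1 + HHI / (1 - wbar)) / M := by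
  have hMpos : (0 : ℝ) < M := by exact_mod_cast hM
  have hid : ∀ m, w m / (1 - w m) = w m + (w m) ^ 2 / (1 - w m) := by
    intro m
    have h1 : (0 : ℝ) < 1 - w m := by linarith [hw1 m]
    field_simp
    ring
  have hlow : ∀ m, w m + (w m) ^ 2 ≤ w m / (1 - w m) := by
    intro m
    rw [hid m]
    have h1 : (0 : ℝ) < 1 - w m := by linarith [hw1 m]
    have : (w m) ^ 2 ≤ (w m) ^ 2 / (1 - w m) := by
      rw [le_div_iff₀ h1]
      nlinarith [sq_nonneg (w m), hw0 m]
    linarith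
  have hhigh : ∀ m, w m / (1 - w m) ≤ w m + (w m) ^ 2 / (1 - wbar) := by
    intro m
    rw [hid m]
    have h1 : (0 : ℝ) < 1 - w m := by linarith [hw1 m]
    have h2 : (0 : ℝ) < 1 - wbar := by linarith
    have : (w m) ^ 2 / (1 - w m) ≤ (w m) ^ 2 / (1 - wbar) := by
      apply div_le_div_of_nonneg_left (sq_nonneg _) h2
      linarith [hle m]
    linarith
  have hsumlow : 1 + HHI ≤ ∑ m, w m / (1 - w m) := by
    calc 1 + HHI = ∑ m, (w m + (w m) ^ 2) := by
          rw [Finset.sum_add_distrib, hsum, hHHI]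
      _ ≤ _ := Finset.sum_le_sum fun m _ => hlow m
  have hsumhigh : ∑ m, w m / (1 - w m) ≤ 1 + HHI / (1 - wbar) := by
    calc ∑ m, w m / (1 - w m) ≤ ∑ m, (w m + (w m) ^ 2 / (1 - wbar)) :=
          Finset.sum_le_sum fun m _ => hhigh m
      _ = 1 + HHI / (1 - wbar) := by
          rw [Finset.sum_add_distrib, hsum, hHHI, Finset.sum_div]
  constructor
  · rw [div_eq_inv_mul, ← one_div]
    exact mul_le_mul_of_nonneg_left hsumlow (by positivity)
  · rw [div_eq_inv_mul (1 + HHI / (1 - wbar)), ← one_div]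
    exact mul_le_mul_of_nonneg_left hsumhigh (by positivity)
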